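/- Let (A,‖·‖) be a commutative unital complex Banach algebra which is semisimple (Jacobson radical {0}) and regular, and let |·| be any algebra norm on A. Then every ‖·‖-continuous nonzero multiplicative linear functional on A is |·|-continuous, i.e., M(A,|·|) = M(A,‖·‖). -/

import Mathlib

/-- `M(A)`: the nonzero continuous multiplicative linear functionals on the
topological algebra `A`. -/
def CharSpace (A : Type*) [Ring A] [Module ℂ A] [TopologicalSpace A] :
    Set (A → ℂ) :=
  {f | (∀ x y, f (x + y) = f x + f y) ∧ (∀ (c : ℂ) (x : A), f (c • x) = c * f x) ∧
       (∀ x y, f (x * y) = f x * f y) ∧ f ≠ 0 ∧ Continuous f}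

/-- `M(A, q)`: the nonzero multiplicative linear functionals on `A` that are
continuous (i.e. bounded) with respect to the norm `q`. -/
def MSpec {A : Type*} [Ring A] [Module ℂ A] (q : A → ℝ) : Set (A → ℂ) :=
  {f | (∀ x y, f (x + y) = f x + f y) ∧ (∀ (c : ℂ) (x : A), f (c • x) = c * f x) ∧
       (∀ x y, f (x * y) = f x * f y) ∧ f ≠ 0 ∧ (∃ C : ℝ, ∀ x, ‖f x‖ ≤ C * q x)}

/-- `A` is regular: for every subset `F` of `M(A)` closed in the weak-*
(pointwise convergence) topology and every `f₁ ∈ M(A) \ F` there is `x ∈ A`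
vanishing on `F` with `f₁ x ≠ 0`. -/
def IsRegularAlg (A : Type*) [Ring A] [Module ℂ A] [TopologicalSpace A] : Prop :=
  ∀ F : Set (A → ℂ), F ⊆ CharSpace A →
    IsClosed {g : ↥(CharSpace A) | (g : A → ℂ) ∈ F} →
    ∀ f₁ ∈ CharSpace A, f₁ ∉ F → ∃ x : A, (∀ f ∈ F, f x = 0) ∧ f₁ x ≠ 0

/-!
Let `E` be the weak-* closed set of characters of `A` that are contractive for `q`. If a
character `φ` were outside `E`, regularity would give `y` vanishing on `E` with `φ y = 1`, and
then `z` with `φ z = 1` vanishing on the characters with `|f y| ≤ 1/2`. On the closed set where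
`|f y| ≥ 1/2`, `y` is invertible modulo the kernel of that set (its characters are those of the
quotient Banach algebra, which regularity confines to the set), so some `w = y v` equals `1`
there. Hence `z (1 - w)` is killed by every character, so `z = z w ^ n` for all `n` by
semisimplicity. Every character of the completion of `(A, q)` is contractive, hence kills `w`;
thus `w` is quasinilpotent there and Gelfand's formula gives `q (w ^ n) < 1` for some `n`,
contradicting `q z ≤ q z * q (w ^ n)`. The other inclusion is the automatic continuity of
characters of a Banach algebra.
-/

open WeakDual Filter

section Characters

variable {A : Type*}

theorem exists_algHom_coe_eq_iff [Ring A] [Algebra ℂ A] {f : A → ℂ} :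
    (∃ φ : A →ₐ[ℂ] ℂ, ⇑φ = f) ↔ (∀ x y, f (x + y) = f x + f y) ∧
      (∀ (c : ℂ) (x : A), f (c • x) = c * f x) ∧ (∀ x y, f (x * y) = f x * f y) ∧ f ≠ 0 := by
  constructor
  · rintro ⟨φ, rfl⟩
    refine ⟨map_add φ, map_smul φ, map_mul φ, fun h => ?_⟩
    simpa using congrFun h 1
  · rintro ⟨hadd, hsmul, hmul, hne⟩
    have h1 : f 1 = 1 := by
      obtain ⟨x, hx⟩ := Function.ne_iff.mp hne
      exact mul_left_cancel₀ hx (by rw [← hmul, mul_one, mul_one])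
    refine ⟨{ toFun := f
              map_one' := h1
              map_mul' := hmul
              map_zero' := by simpa using hsmul 0 0
              map_add' := hadd
              commutes' := fun c => by simpa [Algebra.algebraMap_eq_smul_one, h1] using hsmul c 1 },
      rfl⟩

theorem mem_mSpec_iff [Ring A] [Algebra ℂ A] {q : A → ℝ} {f : A → ℂ} :
    f ∈ MSpec q ↔ ∃ φ : A →ₐ[ℂ] ℂ, ⇑φ = f ∧ ∃ C : ℝ, ∀ x, ‖φ x‖ ≤ C * q x := by
  constructor
  · rintro ⟨hadd, hsmul, hmul, hne, hC⟩
    obtain ⟨φ, rfl⟩ := exists_algHom_coe_eq_iff.2 ⟨hadd, hsmul, hmul, hne⟩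
    exact ⟨φ, rfl, hC⟩
  · rintro ⟨φ, rfl, hC⟩
    obtain ⟨hadd, hsmul, hmul, hne⟩ := exists_algHom_coe_eq_iff.1 ⟨φ, rfl⟩
    exact ⟨hadd, hsmul, hmul, hne, hC⟩

theorem mem_charSpace_iff [NormedRing A] [NormedAlgebra ℂ A] [CompleteSpace A] {f : A → ℂ} :
    f ∈ CharSpace A ↔ ∃ φ : A →ₐ[ℂ] ℂ, ⇑φ = f := by
  constructor
  · rintro ⟨hadd, hsmul, hmul, hne, -⟩
    exact exists_algHom_coe_eq_iff.2 ⟨hadd, hsmul, hmul, hne⟩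
  · rintro ⟨φ, rfl⟩
    obtain ⟨hadd, hsmul, hmul, hne⟩ := exists_algHom_coe_eq_iff.1 ⟨φ, rfl⟩
    exact ⟨hadd, hsmul, hmul, hne, map_continuous φ⟩

end Characters

theorem norm_apply_le_of_norm_apply_le_mul {R 𝕜 F : Type*} [SeminormedRing R]
    [NormedDivisionRing 𝕜] [FunLike F R 𝕜] [MonoidHomClass F R 𝕜] (f : F) {C : ℝ}
    (hC : ∀ x, ‖f x‖ ≤ C * ‖x‖) (x : R) : ‖f x‖ ≤ ‖x‖ := by
  rcases le_or_gt C 0 with hC0 | hC0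
  · exact ((hC x).trans (mul_nonpos_of_nonpos_of_nonneg hC0 (norm_nonneg x))).trans
      (norm_nonneg x)
  have hpow : ∀ n : ℕ, ‖f x‖ ^ (n + 1) ≤ C * ‖x‖ ^ (n + 1) := fun n =>
    calc ‖f x‖ ^ (n + 1) = ‖f (x ^ (n + 1))‖ := by rw [map_pow, norm_pow]
      _ ≤ C * ‖x ^ (n + 1)‖ := hC _
      _ ≤ C * ‖x‖ ^ (n + 1) := by gcongr; exact norm_pow_le' x n.succ_pos
  by_contra! hlt
  rcases (norm_nonneg x).eq_or_lt with hx | hx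
  · have h0 := hC x
    rw [← hx, mul_zero] at h0
    linarith
  · obtain ⟨n, hn⟩ := pow_unbounded_of_one_lt C ((one_lt_div hx).2 hlt)
    have hCn : C < (‖f x‖ / ‖x‖) ^ (n + 1) :=
      hn.trans_le (pow_le_pow_right₀ ((one_lt_div hx).2 hlt).le n.le_succ)
    rw [div_pow, lt_div_iff₀ (by positivity)] at hCn
    linarith [hpow n]

theorem AlgHom.norm_apply_le_self_of_completeSpace {𝕜 B : Type*} [NormedField 𝕜] [NormedRing B]
    [NormedAlgebra 𝕜 B] [CompleteSpace B] (φ : B →ₐ[𝕜] 𝕜) (b : B) : ‖φ b‖ ≤ ‖b‖ :=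
  norm_apply_le_of_norm_apply_le_mul φ
    (fun x => by rw [mul_comm]; exact AlgHom.norm_apply_le_self_mul_norm_one φ x) b

theorem spectralRadius_eq_zero_of_forall_character {B : Type*} [NormedCommRing B]
    [NormedAlgebra ℂ B] [CompleteSpace B] {b : B} (hb : ∀ χ : characterSpace ℂ B, χ b = 0) :
    spectralRadius ℂ b = 0 := by
  refine le_antisymm (iSup₂_le fun k hk => ?_) zero_le
  obtain ⟨χ, rfl⟩ := CharacterSpace.mem_spectrum_iff_exists.1 hk
  simp [hb χ]

theorem exists_norm_pow_lt_one_of_spectralRadius_lt_one {B : Type*} [NormedRing B]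
    [NormedAlgebra ℂ B] [CompleteSpace B] {b : B} (hb : spectralRadius ℂ b < 1) :
    ∃ n : ℕ, ‖b ^ n‖ < 1 := by
  obtain ⟨n, hn, hn0⟩ :=
    (((spectrum.pow_norm_pow_one_div_tendsto_nhds_spectralRadius b).eventually_lt_const hb).and
      (eventually_gt_atTop 0)).exists
  rw [ENNReal.ofReal_lt_one, Real.rpow_lt_one_iff' (norm_nonneg _) (by positivity)] at hn
  exact ⟨n, hn⟩

section Regular

variable {A : Type*} [Ring A] [Module ℂ A] [TopologicalSpace A]

theorem isClosed_setOf_mem_charSpace_inter {S : Set (A → ℂ)} (hS : IsClosed S) :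
    IsClosed {g : ↥(CharSpace A) | (g : A → ℂ) ∈ CharSpace A ∩ S} := by
  convert hS.preimage continuous_subtype_val using 1
  ext g
  simp

theorem IsRegularAlg.exists_eq_zero_on_eq_one (hreg : IsRegularAlg A) {F : Set (A → ℂ)}
    (hF : F ⊆ CharSpace A) (hFc : IsClosed {g : ↥(CharSpace A) | (g : A → ℂ) ∈ F})
    {f₁ : A → ℂ} (hf₁ : f₁ ∈ CharSpace A) (hf₁F : f₁ ∉ F) :
    ∃ x : A, (∀ f ∈ F, f x = 0) ∧ f₁ x = 1 := by
  obtain ⟨x, hxF, hx⟩ := hreg F hF hFc f₁ hf₁ hf₁F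
  refine ⟨(f₁ x)⁻¹ • x, fun f hf => ?_, ?_⟩
  · rw [(hF hf).2.1, hxF f hf, mul_zero]
  · rw [hf₁.2.1, inv_mul_cancel₀ hx]

end Regular

section Banach

variable {A : Type*} [NormedCommRing A] [NormedAlgebra ℂ A] [CompleteSpace A]

theorem eq_zero_of_forall_algHom_apply_eq_zero (hss : Ideal.jacobson (⊥ : Ideal A) = ⊥) {a : A}
    (ha : ∀ φ : A →ₐ[ℂ] ℂ, φ a = 0) : a = 0 := by
  rw [← Ideal.mem_bot, ← hss, Ideal.mem_jacobson_bot]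
  intro y
  by_contra h
  obtain ⟨χ, hχ⟩ := CharacterSpace.exists_apply_eq_zero h
  have hχa : χ a = 0 := ha (CharacterSpace.toAlgHom χ)
  simp [hχa] at hχ

theorem IsRegularAlg.exists_mul_eq_one_on (hreg : IsRegularAlg A) {F : Set (A → ℂ)}
    (hF : F ⊆ CharSpace A) (hFc : IsClosed {g : ↥(CharSpace A) | (g : A → ℂ) ∈ F})
    {y : A} (hy : ∀ f ∈ F, f y ≠ 0) : ∃ v : A, ∀ f ∈ F, f (y * v) = 1 := by
  let I : Ideal A := ⨅ φ : {φ : A →ₐ[ℂ] ℂ // ⇑φ ∈ F}, RingHom.ker (φ : A →ₐ[ℂ] ℂ)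
  have hI : ∀ a, a ∈ I ↔ ∀ f ∈ F, f a = 0 := by
    intro a
    simp only [I, Ideal.mem_iInf, RingHom.mem_ker, Subtype.forall]
    refine ⟨fun h f hf => ?_, fun h φ hφ => h φ hφ⟩
    obtain ⟨φ, rfl⟩ := mem_charSpace_iff.1 (hF hf)
    exact h φ hf
  have : IsClosed (I : Set A) := by
    have hIeq : (I : Set A) = ⋂ f ∈ F, f ⁻¹' {0} := by
      ext a
      simp [hI]
    rw [hIeq]
    exact isClosed_biInter fun f hf => isClosed_singleton.preimage (hF hf).2.2.2.2
  have hunit : IsUnit (Ideal.Quotient.mk I y) := by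
    by_contra h
    obtain ⟨χ, hχ⟩ := CharacterSpace.exists_apply_eq_zero h
    let ψ : A →ₐ[ℂ] ℂ := (CharacterSpace.toAlgHom χ).comp (Ideal.Quotient.mkₐ ℂ I)
    -- `ψ` vanishes on `I`, the kernel of `F`, and regularity says `F` is the hull of its kernel
    have hψF : ⇑ψ ∈ F := by
      by_contra hψF
      obtain ⟨x, hxF, hx⟩ := hreg F hF hFc ψ (mem_charSpace_iff.2 ⟨ψ, rfl⟩) hψF
      exact hx (by simp [ψ, Ideal.Quotient.eq_zero_iff_mem.2 ((hI x).2 hxF)])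
    exact hy ψ hψF hχ
  obtain ⟨b, hb⟩ := hunit.exists_right_inv
  obtain ⟨v, rfl⟩ := Ideal.Quotient.mk_surjective b
  have hv : y * v - 1 ∈ I := Ideal.Quotient.eq.1 (by rw [map_mul, hb, map_one])
  refine ⟨v, fun f hf => ?_⟩
  obtain ⟨φ, rfl⟩ := mem_charSpace_iff.1 (hF hf)
  simpa [sub_eq_zero] using (hI _).1 hv φ hf

theorem exists_mul_eq_self_of_notMem (hss : Ideal.jacobson (⊥ : Ideal A) = ⊥)
    (hreg : IsRegularAlg A) {F : Set (A → ℂ)} (hF : F ⊆ CharSpace A)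
    (hFc : IsClosed {g : ↥(CharSpace A) | (g : A → ℂ) ∈ F}) {f₀ : A → ℂ}
    (hf₀ : f₀ ∈ CharSpace A) (hf₀F : f₀ ∉ F) :
    ∃ z w : A, z ≠ 0 ∧ z * w = z ∧ ∀ f ∈ F, f w = 0 := by
  obtain ⟨y, hyF, hf₀y⟩ := hreg.exists_eq_zero_on_eq_one hF hFc hf₀ hf₀F
  set small := CharSpace A ∩ {f : A → ℂ | ‖f y‖ ≤ 1 / 2}
  set large := CharSpace A ∩ {f : A → ℂ | 1 / 2 ≤ ‖f y‖}
  have hf₀small : f₀ ∉ small := fun h => absurd h.2 (by norm_num [hf₀y])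
  obtain ⟨z, hz, hf₀z⟩ := hreg.exists_eq_zero_on_eq_one Set.inter_subset_left
    (isClosed_setOf_mem_charSpace_inter (isClosed_le (continuous_apply y).norm continuous_const))
    hf₀ hf₀small
  obtain ⟨v, hv⟩ := hreg.exists_mul_eq_one_on (F := large) Set.inter_subset_left
    (isClosed_setOf_mem_charSpace_inter (isClosed_le continuous_const (continuous_apply y).norm))
    (y := y) fun f hf h => absurd hf.2 (by norm_num [h])
  refine ⟨z, y * v, ?_, ?_, fun f hf => by rw [(hF hf).2.2.1, hyF f hf, zero_mul]⟩
  · rintro rfl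
    obtain ⟨φ, rfl⟩ := mem_charSpace_iff.1 hf₀
    simp at hf₀z
  · have hzw : z * (1 - y * v) = 0 := eq_zero_of_forall_algHom_apply_eq_zero hss fun φ => by
      have hφ : ⇑φ ∈ CharSpace A := mem_charSpace_iff.2 ⟨φ, rfl⟩
      rcases le_total ‖φ y‖ (1 / 2) with h | h
      · rw [map_mul, hz φ ⟨hφ, h⟩, zero_mul]
      · rw [map_mul, map_sub, map_one, hv φ ⟨hφ, h⟩, sub_self, mul_zero]
    rwa [mul_sub, mul_one, sub_eq_zero, eq_comm] at hzw

variable {Q : Type*} [NormedCommRing Q] [NormedAlgebra ℂ Q]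

theorem exists_norm_pow_lt_one_of_forall_eq_zero (ι : A →ₐ[ℂ] Q) {w : A}
    (hw : ∀ f ∈ CharSpace A ∩ {f : A → ℂ | ∀ a, ‖f a‖ ≤ ‖ι a‖}, f w = 0) :
    ∃ n : ℕ, ‖ι w ^ n‖ < 1 := by
  let ρ : A →ₐ[ℂ] UniformSpace.Completion Q :=
    AlgHom.mk' (UniformSpace.Completion.coeRingHom.comp ι.toRingHom) fun c a =>
      (congrArg _ (map_smul ι c a)).trans (UniformSpace.Completion.coe_smul c (ι a))
  have hρ : ∀ a, ‖ρ a‖ = ‖ι a‖ := fun a => UniformSpace.Completion.norm_coe _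
  have hzero : ∀ χ : characterSpace ℂ (UniformSpace.Completion Q), χ (ρ w) = 0 := fun χ => by
    let ψ := (CharacterSpace.toAlgHom χ).comp ρ
    refine hw ψ ⟨mem_charSpace_iff.2 ⟨ψ, rfl⟩, fun a => ?_⟩
    rw [← hρ]
    exact AlgHom.norm_apply_le_self_of_completeSpace (CharacterSpace.toAlgHom χ) (ρ a)
  obtain ⟨n, hn⟩ := exists_norm_pow_lt_one_of_spectralRadius_lt_one
    ((spectralRadius_eq_zero_of_forall_character hzero).trans_lt zero_lt_one)
  exact ⟨n, by rwa [← map_pow, hρ, map_pow] at hn⟩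

theorem norm_apply_le_of_isRegularAlg (hss : Ideal.jacobson (⊥ : Ideal A) = ⊥)
    (hreg : IsRegularAlg A) (ι : A →ₐ[ℂ] Q) (hι : Function.Injective ι) (φ : A →ₐ[ℂ] ℂ)
    (x : A) : ‖φ x‖ ≤ ‖ι x‖ := by
  have hclosed : IsClosed {f : A → ℂ | ∀ a, ‖f a‖ ≤ ‖ι a‖} := by
    simp only [Set.ofPred_forall]
    exact isClosed_iInter fun a => isClosed_le (continuous_apply a).norm continuous_const
  by_contra hx
  obtain ⟨z, w, hz, hzw, hw⟩ := exists_mul_eq_self_of_notMem hss hreg Set.inter_subset_left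
    (isClosed_setOf_mem_charSpace_inter hclosed) (mem_charSpace_iff.2 ⟨φ, rfl⟩)
    (fun h => hx (h.2 x))
  obtain ⟨n, hn⟩ := exists_norm_pow_lt_one_of_forall_eq_zero ι hw
  have hιz : 0 < ‖ι z‖ := norm_pos_iff.2 ((map_ne_zero_iff ι hι).2 hz)
  have hzwn : ∀ m : ℕ, z * w ^ m = z := fun m => by
    induction m with
    | zero => rw [pow_zero, mul_one]
    | succ m ih => rw [pow_succ, ← mul_assoc, ih, hzw]
  have : ‖ι z‖ ≤ ‖ι z‖ * ‖ι w ^ n‖ :=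
    calc ‖ι z‖ = ‖ι z * ι w ^ n‖ := by rw [← map_pow, ← map_mul, hzwn n]
      _ ≤ ‖ι z‖ * ‖ι w ^ n‖ := norm_mul_le _ _
  nlinarith

end Banach

def AlgebraNorm.of {A : Type*} [Ring A] [Algebra ℂ A] (q : A → ℝ)
    (hq0 : ∀ x, q x = 0 ↔ x = 0) (hadd : ∀ x y, q (x + y) ≤ q x + q y)
    (hsmul : ∀ (c : ℂ) (x : A), q (c • x) = ‖c‖ * q x)
    (hmul : ∀ x y, q (x * y) ≤ q x * q y) : AlgebraNorm ℂ A where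
  toFun := q
  map_zero' := (hq0 0).2 rfl
  add_le' := hadd
  neg' x := by simpa using hsmul (-1) x
  mul_le' := hmul
  eq_zero_of_map_eq_zero' x := (hq0 x).1
  smul' := hsmul

def Renormed {A : Type*} [Ring A] [Algebra ℂ A] (_p : AlgebraNorm ℂ A) : Type _ := A

namespace Renormed

variable {A : Type*} [CommRing A] [Algebra ℂ A] (p : AlgebraNorm ℂ A)

instance : NormedCommRing (Renormed p) :=
  { p.toRingNorm.toNormedRing, (inferInstance : CommRing A) with }

instance : NormedAlgebra ℂ (Renormed p) :=
  { (inferInstance : Algebra ℂ A) with norm_smul_le := fun c x => (p.smul' c x).le }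

def toRenormed : A →ₐ[ℂ] Renormed p := AlgHom.id ℂ A

theorem toRenormed_injective : Function.Injective (toRenormed p) := fun _ _ h => h

theorem norm_toRenormed (a : A) : ‖toRenormed p a‖ = p a := rfl

end Renormed

/-- Let `A` be a regular semisimple commutative unital complex Banach algebra and
`q` any algebra norm on `A`. Then the `q`-continuous nonzero multiplicative linear
functionals coincide with the `‖·‖`-continuous ones: `M(A,q) = M(A,‖·‖)`. -/
theorem mSpec_eq_charSpace_of_regular_semisimple {A : Type*} [NormedCommRing A]
    [NormedAlgebra ℂ A] [CompleteSpace A]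
    (hss : Ideal.jacobson (⊥ : Ideal A) = ⊥)
    (hreg : IsRegularAlg A)
    (q : A → ℝ)
    (hq0 : ∀ x, q x = 0 ↔ x = 0)
    (hadd : ∀ x y, q (x + y) ≤ q x + q y)
    (hsmul : ∀ (c : ℂ) (x : A), q (c • x) = ‖c‖ * q x)
    (hmul : ∀ x y, q (x * y) ≤ q x * q y) :
    MSpec q = CharSpace A := by
  let p := AlgebraNorm.of q hq0 hadd hsmul hmul
  ext f
  rw [mem_mSpec_iff, mem_charSpace_iff]
  refine ⟨fun ⟨φ, hφ, _⟩ => ⟨φ, hφ⟩, fun ⟨φ, hφ⟩ => ⟨φ, hφ, 1, fun x => ?_⟩⟩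
  rw [one_mul]
  exact (norm_apply_le_of_isRegularAlg hss hreg _ (Renormed.toRenormed_injective p) φ x).trans_eq
    (Renormed.norm_toRenormed p x)
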